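/- Let n be an even positive integer, ℓ ≥ 1 an integer, and d > 0. Define k̃_ℓ(r,t) = t k_{ℓ+1}(√(t²−r²)/2) − 2 k_ℓ(√(t²−r²)/2) with k_ℓ as below. Then there exists T ≥ d such that for all t ≥ T, the map r ↦ e^{−t/2} k̃_ℓ(r,t) is strictly increasing on [0,d]. -/

import Mathlib

/-!
With `s = √(t² - r²) / 2`, increasing `r` decreases `s`, and once `t ≤ 2 s + 1` on `[0, d]` it
suffices that `(2 s₂ + 1) (k_{ℓ+1}(s₁) - k_{ℓ+1}(s₂)) < 2 (k_ℓ(s₁) - k_ℓ(s₂))` for `0 ≤ s₂ < s₁`.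
Both differences are series in `A_j = s₁^{2j+1} - s₂^{2j+1} ≥ 0`, with `A_{j+1} ≥ s₂² A_j`, and the
denominators `c_j` of `k_ℓ` become `m_j c_j` in `k_{ℓ+1}`, where `m_j = 2j + 2ℓ + 2`. The claim becomes
`Σ g_j < Σ f_j` for `f_j = (2 - 1/m_j) A_j / c_j` and `g_j = 2 s₂ A_j / (m_j c_j)`, which follows by
summing `2 g_j ≤ f_j + f_{j+1}`: a quadratic inequality in `s₂` whose discriminant is negative
because `ℓ ≥ 1`.
-/

open Set

noncomputable section

/-- `k_ℓ(s) = Σ_{j=0}^∞ s^{2j+1} / ((2(j+ℓ))!! (2j+1)!!)`. -/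
def kEven (ℓ : ℕ) (s : ℝ) : ℝ :=
  ∑' j : ℕ, s ^ (2 * j + 1) /
    (((2 * (j + ℓ)).doubleFactorial : ℝ) * ((2 * j + 1).doubleFactorial : ℝ))

/-- `k̃_ℓ(r,t) = t k_{ℓ+1}(√(t²−r²)/2) − 2 k_ℓ(√(t²−r²)/2)`. -/
def kTilde (ℓ : ℕ) (r t : ℝ) : ℝ :=
  t * kEven (ℓ + 1) (Real.sqrt (t ^ 2 - r ^ 2) / 2)
    - 2 * kEven ℓ (Real.sqrt (t ^ 2 - r ^ 2) / 2)

lemma tsum_lt_tsum_of_two_mul_le_add_succ {f g : ℕ → ℝ} (hf : Summable f) (hg : Summable g)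
    (h : ∀ j, 2 * g j ≤ f j + f (j + 1)) (h0 : 0 < f 0) : ∑' j, g j < ∑' j, f j := by
  have hf' : Summable (fun j => f (j + 1)) := (summable_nat_add_iff 1).2 hf
  have hsum : 2 * ∑' j, g j ≤ ∑' j, f j + ∑' j, f (j + 1) := by
    rw [← tsum_mul_left, ← hf.tsum_add hf']
    exact (hg.mul_left 2).tsum_le_tsum h (hf.add hf')
  linarith [hf.tsum_eq_zero_add]

lemma quadratic_le_of_add_one_le {m P s : ℝ} (hP : 0 ≤ P) (hmP : P + 1 ≤ m) :
    4 * (m + 2) * P * s ≤ (2 * m - 1) * (m + 2) * P + (2 * m + 3) * s ^ 2 := by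
  have hdisc : 4 * (m + 2) * P ≤ (2 * m - 1) * (2 * m + 3) := by nlinarith
  refine le_of_mul_le_mul_left ?_ (by linarith : 0 < 2 * m + 3)
  have hmP : 0 ≤ (m + 2) * P := by nlinarith
  nlinarith [sq_nonneg ((2 * m + 3) * s - 2 * (m + 2) * P), mul_le_mul_of_nonneg_left hdisc hmP]

lemma sub_one_le_sqrt_sq_sub_sq {r t : ℝ} (h : r ^ 2 ≤ 2 * t - 1) :
    t - 1 ≤ √(t ^ 2 - r ^ 2) :=
  (le_abs_self _).trans (Real.abs_le_sqrt (by nlinarith))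

def kDenom (ℓ j : ℕ) : ℝ :=
  ((2 * (j + ℓ)).doubleFactorial : ℝ) * ((2 * j + 1).doubleFactorial : ℝ)

lemma kEven_eq_tsum (ℓ : ℕ) (s : ℝ) : kEven ℓ s = ∑' j, s ^ (2 * j + 1) / kDenom ℓ j := rfl

lemma kDenom_pos (ℓ j : ℕ) : 0 < kDenom ℓ j := by
  have := Nat.doubleFactorial_pos (2 * (j + ℓ))
  have := Nat.doubleFactorial_pos (2 * j + 1)
  unfold kDenom
  positivity

lemma kDenom_succ_left (ℓ j : ℕ) :
    kDenom (ℓ + 1) j = (2 * j + 2 * ℓ + 2) * kDenom ℓ j := by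
  rw [kDenom, kDenom, show 2 * (j + (ℓ + 1)) = 2 * (j + ℓ) + 2 by ring,
    Nat.doubleFactorial_add_two]
  push_cast
  ring

lemma kDenom_succ_right (ℓ j : ℕ) :
    kDenom ℓ (j + 1) = (2 * j + 2 * ℓ + 2) * (2 * j + 3) * kDenom ℓ j := by
  rw [kDenom, kDenom, show 2 * (j + 1 + ℓ) = 2 * (j + ℓ) + 2 by ring,
    show 2 * (j + 1) + 1 = 2 * j + 1 + 2 by ring,
    Nat.doubleFactorial_add_two, Nat.doubleFactorial_add_two]
  push_cast
  ring

lemma kDenom_le_kDenom_succ (ℓ j : ℕ) : kDenom ℓ j ≤ kDenom (ℓ + 1) j := by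
  rw [kDenom_succ_left]
  exact le_mul_of_one_le_left (kDenom_pos ℓ j).le (by norm_cast; omega)

lemma kDenom_zero (j : ℕ) : kDenom 0 j = (2 * j + 1).factorial := by
  rw [kDenom, add_zero, Nat.factorial_eq_mul_doubleFactorial, mul_comm]
  push_cast
  rfl

lemma kDenom_zero_le (ℓ j : ℕ) : kDenom 0 j ≤ kDenom ℓ j :=
  monotone_nat_of_le_succ (fun ℓ => kDenom_le_kDenom_succ ℓ j) (Nat.zero_le ℓ)

lemma summable_kEven_terms (ℓ : ℕ) (s : ℝ) :
    Summable (fun j : ℕ => s ^ (2 * j + 1) / kDenom ℓ j) := by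
  have hexp : Summable (fun j : ℕ => |s| ^ (2 * j + 1) / (2 * j + 1).factorial) :=
    (Real.summable_pow_div_factorial |s|).comp_injective (fun a b hab => by omega)
  refine .of_norm_bounded hexp (fun j => ?_)
  rw [Real.norm_eq_abs, abs_div, abs_pow, abs_of_pos (kDenom_pos ℓ j), ← kDenom_zero]
  exact div_le_div_of_nonneg_left (by positivity) (kDenom_pos 0 j) (kDenom_zero_le ℓ j)

lemma kEven_monotoneOn (ℓ : ℕ) : MonotoneOn (kEven ℓ) (Ici 0) := fun s₂ hs₂ s₁ _ h =>
  (summable_kEven_terms ℓ s₂).tsum_le_tsum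
    (fun j => div_le_div_of_nonneg_right (pow_le_pow_left₀ hs₂ h _) (kDenom_pos ℓ j).le)
    (summable_kEven_terms ℓ s₁)

lemma two_mul_div_kDenom_succ_le {ℓ : ℕ} (hℓ : 1 ≤ ℓ) {s A A' : ℝ} (hA : 0 ≤ A)
    (hA' : s ^ 2 * A ≤ A') (j : ℕ) :
    2 * (2 * s * (A / kDenom (ℓ + 1) j)) ≤
      (2 * (A / kDenom ℓ j) - A / kDenom (ℓ + 1) j) +
        (2 * (A' / kDenom ℓ (j + 1)) - A' / kDenom (ℓ + 1) (j + 1)) := by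
  set c := kDenom ℓ j
  set m : ℝ := 2 * j + 2 * ℓ + 2
  set P : ℝ := 2 * j + 3
  have hc : 0 < c := kDenom_pos ℓ j
  have hP : 0 < P := by positivity
  have hmP : P + 1 ≤ m := by
    have : (1 : ℝ) ≤ ℓ := by exact_mod_cast hℓ
    linarith
  have hm : 0 < m := by linarith
  rw [kDenom_succ_left ℓ (j + 1), kDenom_succ_right, kDenom_succ_left]
  push_cast
  rw [show 2 * (j + 1 : ℝ) + 2 * ℓ + 2 = m + 2 by ring, ← sub_nonneg]
  have key : (2 * (A / c) - A / (m * c) + (2 * (A' / (m * P * c)) - A' / ((m + 2) * (m * P * c))) -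
      2 * (2 * s * (A / (m * c)))) =
      (((2 * m - 1) * (m + 2) * P - 4 * (m + 2) * P * s) * A + (2 * m + 3) * A') /
        ((m + 2) * m * P * c) := by
    field_simp
    ring
  rw [key]
  have hq := quadratic_le_of_add_one_le (s := s) hP.le hmP
  apply div_nonneg _ (by positivity)
  nlinarith

lemma two_mul_add_one_mul_tsum_lt {ℓ : ℕ} (hℓ : 1 ≤ ℓ) {s : ℝ} {A : ℕ → ℝ} (hA : ∀ j, 0 ≤ A j)
    (hA₀ : 0 < A 0) (hstep : ∀ j, s ^ 2 * A j ≤ A (j + 1))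
    (hsum : Summable fun j => A j / kDenom ℓ j)
    (hsum_succ : Summable fun j => A j / kDenom (ℓ + 1) j) :
    (2 * s + 1) * ∑' j, A j / kDenom (ℓ + 1) j < 2 * ∑' j, A j / kDenom ℓ j := by
  have hf₀ : 0 < 2 * (A 0 / kDenom ℓ 0) - A 0 / kDenom (ℓ + 1) 0 := by
    have := div_le_div_of_nonneg_left hA₀.le (kDenom_pos ℓ 0) (kDenom_le_kDenom_succ ℓ 0)
    have := div_pos hA₀ (kDenom_pos ℓ 0)
    linarith
  have hlt := tsum_lt_tsum_of_two_mul_le_add_succ ((hsum.mul_left 2).sub hsum_succ)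
    (hsum_succ.mul_left (2 * s))
    (fun j => two_mul_div_kDenom_succ_le hℓ (hA j) (hstep j) j) hf₀
  rw [(hsum.mul_left 2).tsum_sub hsum_succ, tsum_mul_left, tsum_mul_left] at hlt
  linarith

lemma kEven_succ_sub_lt {ℓ : ℕ} (hℓ : 1 ≤ ℓ) {s₁ s₂ : ℝ} (hs₂ : 0 ≤ s₂) (h : s₂ < s₁) :
    (2 * s₂ + 1) * (kEven (ℓ + 1) s₁ - kEven (ℓ + 1) s₂) < 2 * (kEven ℓ s₁ - kEven ℓ s₂) := by
  set A : ℕ → ℝ := fun j => s₁ ^ (2 * j + 1) - s₂ ^ (2 * j + 1)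
  have hpow_lt : ∀ n ≠ 0, s₂ ^ n < s₁ ^ n := fun n hn => pow_lt_pow_left₀ h hs₂ hn
  have hstep (j : ℕ) : s₂ ^ 2 * A j ≤ A (j + 1) := by
    have := mul_le_mul_of_nonneg_right (hpow_lt 2 two_ne_zero).le
      (pow_nonneg (hs₂.trans h.le) (2 * j + 1))
    simp only [A, show 2 * (j + 1) + 1 = 2 * j + 1 + 2 by ring, pow_add _ (2 * j + 1) 2]
    linarith
  have hdiff (ℓ : ℕ) : kEven ℓ s₁ - kEven ℓ s₂ = ∑' j, A j / kDenom ℓ j := by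
    simp only [kEven_eq_tsum, A, sub_div]
    exact ((summable_kEven_terms ℓ s₁).tsum_sub (summable_kEven_terms ℓ s₂)).symm
  have hsum (ℓ : ℕ) : Summable fun j => A j / kDenom ℓ j := by
    simp only [A, sub_div]
    exact (summable_kEven_terms ℓ s₁).sub (summable_kEven_terms ℓ s₂)
  rw [hdiff, hdiff]
  exact two_mul_add_one_mul_tsum_lt hℓ (fun j => (sub_pos.2 (hpow_lt _ (by omega))).le)
    (sub_pos.2 (hpow_lt 1 one_ne_zero)) hstep (hsum ℓ) (hsum (ℓ + 1))

lemma kTilde_lt_kTilde {ℓ : ℕ} (hℓ : 1 ≤ ℓ) {r₁ r₂ t : ℝ} (hr₁ : 0 ≤ r₁) (h : r₁ < r₂)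
    (hr₂ : r₂ ^ 2 ≤ 2 * t - 1) : kTilde ℓ r₁ t < kTilde ℓ r₂ t := by
  have hsq : 0 ≤ t ^ 2 - r₂ ^ 2 := by nlinarith [sq_nonneg (t - 1)]
  set s₁ := √(t ^ 2 - r₁ ^ 2) / 2
  set s₂ := √(t ^ 2 - r₂ ^ 2) / 2
  have hs₂ : 0 ≤ s₂ := by positivity
  have hs : s₂ < s₁ := by
    have := Real.sqrt_lt_sqrt hsq (by nlinarith : t ^ 2 - r₂ ^ 2 < t ^ 2 - r₁ ^ 2)
    exact div_lt_div_of_pos_right this two_pos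
  have ht : t ≤ 2 * s₂ + 1 := by
    have := sub_one_le_sqrt_sq_sub_sq hr₂
    simp only [s₂]
    linarith
  have hmono : kEven (ℓ + 1) s₂ ≤ kEven (ℓ + 1) s₁ :=
    kEven_monotoneOn (ℓ + 1) hs₂ (hs₂.trans hs.le) hs.le
  have := kEven_succ_sub_lt hℓ hs₂ hs
  have := mul_le_mul_of_nonneg_right ht (sub_nonneg.2 hmono)
  simp only [kTilde]
  linarith

theorem stmt18_general (ℓ : ℕ) (hℓ : 1 ≤ ℓ) (d : ℝ) :
    ∃ T : ℝ, T ≥ d ∧ ∀ t ≥ T,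
      StrictMonoOn (fun r => Real.exp (-t / 2) * kTilde ℓ r t) (Icc (0:ℝ) d) := by
  refine ⟨max d ((d ^ 2 + 1) / 2), le_max_left _ _, fun t ht r₁ hr₁ r₂ hr₂ h => ?_⟩
  have hr₂_sq : r₂ ^ 2 ≤ 2 * t - 1 := by
    have := (le_max_right _ _).trans ht
    nlinarith [hr₂.1, hr₂.2]
  exact mul_lt_mul_of_pos_left (kTilde_lt_kTilde hℓ hr₁.1 h hr₂_sq) (Real.exp_pos _)

/-- For `ℓ ≥ 1` and `d > 0`, there exists `T ≥ d` such that for all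
`t ≥ T` the map `r ↦ e^{−t/2} k̃_ℓ(r,t)` is strictly increasing on `[0,d]`. -/
theorem stmt18 (ℓ : ℕ) (hℓ : 1 ≤ ℓ) (d : ℝ) (hd : 0 < d) :
    ∃ T : ℝ, T ≥ d ∧ ∀ t ≥ T,
      StrictMonoOn (fun r => Real.exp (-t / 2) * kTilde ℓ r t) (Icc (0:ℝ) d) :=
  stmt18_general ℓ hℓ d
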